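/- Monotone chain yielding the robustness conclusion: fix σ > 0, d ∈ ℕ, x, δ ∈ ℤ^d, and let p_X, p_Y be the pmfs on ℤ^d of the product discrete Gaussians centered at x and x+δ. Let S_A = {z ∈ ℤ^d : ⟨z−x,δ⟩ ≤ t_A} and S_B = {z ∈ ℤ^d : ⟨z−x,δ⟩ ≥ t_B} for reals t_A, t_B. If φ_A, φ_B : ℤ^d → [0,1] are randomized tests with ∑_z φ_A(z) p_X(z) ≥ ∑_{z∈S_A} p_X(z) and ∑_z φ_B(z) p_X(z) ≤ ∑_{z∈S_B} p_X(z), then ∑_z φ_A(z) p_Y(z) ≥ ∑_{z∈S_A} p_Y(z) and ∑_z φ_B(z) p_Y(z) ≤ ∑_{z∈S_B} p_Y(z). -/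
import Mathlib


open scoped BigOperators

/-- Discrete Gaussian pmf on ℤ with location `μ` and scale `σ`. -/
noncomputable def dgauss (σ : ℝ) (μ : ℤ) (z : ℤ) : ℝ :=
  Real.exp (-((z : ℝ) - (μ : ℝ)) ^ 2 / (2 * σ ^ 2)) /
    ∑' h : ℤ, Real.exp (-((h : ℝ) - (μ : ℝ)) ^ 2 / (2 * σ ^ 2))

/-- Product discrete Gaussian pmf on `ℤ^d` centered at `x`. -/
noncomputable def dgaussProd (σ : ℝ) (d : ℕ) (x z : Fin d → ℤ) : ℝ :=
  ∏ i, dgauss σ (x i) (z i)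

/-- Standard inner product on `ℝ^d` of (casts of) integer vectors. -/
noncomputable def iprod (d : ℕ) (a b : Fin d → ℤ) : ℝ :=
  ∑ i, (a i : ℝ) * (b i : ℝ)

/-- Squared ℓ₂ norm of (the cast of) an integer vector. -/
noncomputable def nsq (d : ℕ) (a : Fin d → ℤ) : ℝ :=
  ∑ i, ((a i : ℝ)) ^ 2

open Real

lemma Zsum_nat (c : ℝ) (hc : 0 < c) : Summable fun n : ℕ => Real.exp (-(n:ℝ)^2 / c) := by
  refine Summable.of_nonneg_of_le (f := fun n : ℕ => Real.exp (-1/c) ^ n)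
    (fun n => (Real.exp_pos _).le) ?_ ?_
  · intro n
    show Real.exp (-(n:ℝ)^2 / c) ≤ Real.exp (-1/c) ^ n
    rw [← Real.exp_nat_mul]
    apply Real.exp_le_exp.mpr
    have h2 : (n:ℕ) * (-1/c) = -(n:ℝ)/c := by ring
    rw [h2, div_le_div_iff₀ hc hc]
    have hn : (n:ℝ) ≤ (n:ℝ)^2 := by exact_mod_cast Nat.le_self_pow two_ne_zero n
    nlinarith [mul_le_mul_of_nonneg_right hn hc.le]
  · exact summable_geometric_of_lt_one (Real.exp_pos _).le
      (Real.exp_lt_one_iff.mpr (div_neg_of_neg_of_pos (by norm_num) hc))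

lemma Zsum_int (c : ℝ) (hc : 0 < c) : Summable fun h : ℤ => Real.exp (-(h:ℝ)^2 / c) := by
  apply Summable.of_nat_of_neg <;> simpa using Zsum_nat c hc

lemma Zsum_shift (c : ℝ) (hc : 0 < c) (μ : ℤ) :
    Summable fun h : ℤ => Real.exp (-((h:ℝ) - (μ:ℝ))^2 / c) := by
  have := (Zsum_int c hc).comp_injective (Equiv.subRight μ).injective
  refine this.congr fun h => ?_
  simp only [Function.comp, Equiv.subRight_apply]
  push_cast
  ring_nf

lemma Zshift (σ : ℝ) (μ : ℤ) :
    (∑' h : ℤ, Real.exp (-((h:ℝ) - (μ:ℝ))^2 / (2 * σ^2))) =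
      ∑' h : ℤ, Real.exp (-(h:ℝ)^2 / (2 * σ^2)) := by
  rw [← (Equiv.addRight μ).tsum_eq (fun h : ℤ => Real.exp (-((h:ℝ) - (μ:ℝ))^2 / (2 * σ^2)))]
  refine tsum_congr fun h => ?_
  simp only [Equiv.coe_addRight]
  push_cast
  ring_nf

lemma Zpos (σ : ℝ) (hσ : 0 < σ) (μ : ℤ) :
    0 < ∑' h : ℤ, Real.exp (-((h:ℝ) - (μ:ℝ))^2 / (2 * σ^2)) :=
  Summable.tsum_pos (Zsum_shift _ (by positivity) μ) (fun i => (Real.exp_pos _).le) μ (Real.exp_pos _)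

lemma dgauss_pos (σ : ℝ) (hσ : 0 < σ) (μ z : ℤ) : 0 < dgauss σ μ z :=
  div_pos (Real.exp_pos _) (Zpos σ hσ μ)

lemma dgauss_summable (σ : ℝ) (hσ : 0 < σ) (μ : ℤ) : Summable (dgauss σ μ) := by
  unfold dgauss
  exact (Zsum_shift _ (by positivity) μ).div_const _

lemma dgauss_ratio (σ : ℝ) (hσ : 0 < σ) (μ δ z : ℤ) :
    dgauss σ (μ + δ) z =
      dgauss σ μ z * Real.exp ((2 * ((z:ℝ) - μ) * δ - (δ:ℝ)^2) / (2 * σ^2)) := by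
  unfold dgauss
  rw [Zshift σ μ, Zshift σ (μ + δ), div_mul_eq_mul_div, ← Real.exp_add]
  congr 2
  have h2 : (2 : ℝ) * σ^2 ≠ 0 := by positivity
  field_simp
  push_cast
  ring

lemma dgaussProd_nonneg (σ : ℝ) (hσ : 0 < σ) (d : ℕ) (x z : Fin d → ℤ) :
    0 ≤ dgaussProd σ d x z :=
  Finset.prod_nonneg fun i _ => (dgauss_pos σ hσ _ _).le

lemma dgaussProd_summable (σ : ℝ) (hσ : 0 < σ) (d : ℕ) (x : Fin d → ℤ) :
    Summable (dgaussProd σ d x) := by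
  induction d with
  | zero => exact Summable.of_finite
  | succ d ih =>
    rw [← (Fin.consEquiv fun _ : Fin (d+1) => ℤ).summable_iff]
    have : (dgaussProd σ (d+1) x ∘ (Fin.consEquiv fun _ : Fin (d+1) => ℤ)) =
        fun p : ℤ × (Fin d → ℤ) =>
          dgauss σ (x 0) p.1 * dgaussProd σ d (fun i => x i.succ) p.2 := by
      funext p
      simp only [Function.comp, Fin.consEquiv_apply, dgaussProd, Fin.prod_univ_succ,
        Fin.cons_zero, Fin.cons_succ]
    rw [this]
    exact (dgauss_summable σ hσ _).mul_of_nonneg (ih _)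
      (fun a => (dgauss_pos σ hσ _ _).le)
      (fun w => dgaussProd_nonneg σ hσ _ _ _)

lemma dgaussProd_ratio (σ : ℝ) (hσ : 0 < σ) (d : ℕ) (x δ z : Fin d → ℤ) :
    dgaussProd σ d (x + δ) z =
      dgaussProd σ d x z *
        Real.exp ((2 * iprod d (z - x) δ - nsq d δ) / (2 * σ^2)) := by
  unfold dgaussProd
  calc ∏ i, dgauss σ ((x + δ) i) (z i)
      = ∏ i, (dgauss σ (x i) (z i) *
          Real.exp ((2 * ((z i : ℝ) - (x i : ℝ)) * (δ i : ℝ) - (δ i : ℝ)^2) / (2 * σ^2))) := by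
        refine Finset.prod_congr rfl fun i _ => ?_
        exact dgauss_ratio σ hσ (x i) (δ i) (z i)
    _ = (∏ i, dgauss σ (x i) (z i)) *
          ∏ i, Real.exp ((2 * ((z i : ℝ) - (x i : ℝ)) * (δ i : ℝ) - (δ i : ℝ)^2) / (2 * σ^2)) :=
        Finset.prod_mul_distrib
    _ = (∏ i, dgauss σ (x i) (z i)) *
          Real.exp ((2 * iprod d (z - x) δ - nsq d δ) / (2 * σ^2)) := by
        rw [← Real.exp_sum]
        congr 1
        have key : (2 * iprod d (z - x) δ - nsq d δ) =
            ∑ i, (2 * ((z i : ℝ) - (x i : ℝ)) * (δ i : ℝ) - (δ i : ℝ)^2) := by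
          rw [iprod, nsq, Finset.mul_sum, ← Finset.sum_sub_distrib]
          refine Finset.sum_congr rfl fun i _ => ?_
          simp only [Pi.sub_apply]
          push_cast
          ring
        rw [key, Finset.sum_div]

lemma NP_ge {α : Type*} (pX pY : α → ℝ) (hpX : Summable pX) (hpY : Summable pY)
    (hX0 : ∀ z, 0 ≤ pX z) (hY0 : ∀ z, 0 ≤ pY z)
    (S : Set α) (φ : α → ℝ) (hφ0 : ∀ z, 0 ≤ φ z) (hφ1 : ∀ z, φ z ≤ 1)
    (c : ℝ) (hc : 0 ≤ c)
    (hin : ∀ z ∈ S, pY z ≤ c * pX z) (hout : ∀ z ∉ S, c * pX z ≤ pY z)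
    (hA : ∑' z, φ z * pX z ≥ ∑' z : S, pX z) :
    ∑' z, φ z * pY z ≥ ∑' z : S, pY z := by
  rw [tsum_subtype] at hA ⊢
  have SφX : Summable fun z => φ z * pX z :=
    Summable.of_nonneg_of_le (fun z => mul_nonneg (hφ0 z) (hX0 z))
      (fun z => mul_le_of_le_one_left (hX0 z) (hφ1 z)) hpX
  have SφY : Summable fun z => φ z * pY z :=
    Summable.of_nonneg_of_le (fun z => mul_nonneg (hφ0 z) (hY0 z))
      (fun z => mul_le_of_le_one_left (hY0 z) (hφ1 z)) hpY
  have SiX : Summable (S.indicator pX) := hpX.indicator S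
  have SiY : Summable (S.indicator pY) := hpY.indicator S
  have hpt : ∀ z, S.indicator pY z + c * (φ z * pX z) ≤ φ z * pY z + c * S.indicator pX z := by
    intro z
    by_cases hz : z ∈ S
    · rw [Set.indicator_of_mem hz, Set.indicator_of_mem hz]
      nlinarith [mul_nonneg (sub_nonneg.mpr (hφ1 z)) (sub_nonneg.mpr (hin z hz))]
    · rw [Set.indicator_of_notMem hz, Set.indicator_of_notMem hz]
      nlinarith [mul_nonneg (hφ0 z) (sub_nonneg.mpr (hout z hz))]
  have hT := Summable.tsum_le_tsum hpt (SiY.add (SφX.mul_left c)) (SφY.add (SiX.mul_left c))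
  rw [Summable.tsum_add SiY (SφX.mul_left c), Summable.tsum_add SφY (SiX.mul_left c),
    tsum_mul_left, tsum_mul_left] at hT
  have := mul_le_mul_of_nonneg_left hA hc
  linarith

lemma NP_le {α : Type*} (pX pY : α → ℝ) (hpX : Summable pX) (hpY : Summable pY)
    (hX0 : ∀ z, 0 ≤ pX z) (hY0 : ∀ z, 0 ≤ pY z)
    (S : Set α) (φ : α → ℝ) (hφ0 : ∀ z, 0 ≤ φ z) (hφ1 : ∀ z, φ z ≤ 1)
    (c : ℝ) (hc : 0 ≤ c)
    (hin : ∀ z ∈ S, c * pX z ≤ pY z) (hout : ∀ z ∉ S, pY z ≤ c * pX z)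
    (hB : ∑' z, φ z * pX z ≤ ∑' z : S, pX z) :
    ∑' z, φ z * pY z ≤ ∑' z : S, pY z := by
  rw [tsum_subtype] at hB ⊢
  have SφX : Summable fun z => φ z * pX z :=
    Summable.of_nonneg_of_le (fun z => mul_nonneg (hφ0 z) (hX0 z))
      (fun z => mul_le_of_le_one_left (hX0 z) (hφ1 z)) hpX
  have SφY : Summable fun z => φ z * pY z :=
    Summable.of_nonneg_of_le (fun z => mul_nonneg (hφ0 z) (hY0 z))
      (fun z => mul_le_of_le_one_left (hY0 z) (hφ1 z)) hpY
  have SiX : Summable (S.indicator pX) := hpX.indicator S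
  have SiY : Summable (S.indicator pY) := hpY.indicator S
  have hpt : ∀ z, φ z * pY z + c * S.indicator pX z ≤ S.indicator pY z + c * (φ z * pX z) := by
    intro z
    by_cases hz : z ∈ S
    · rw [Set.indicator_of_mem hz, Set.indicator_of_mem hz]
      nlinarith [mul_nonneg (sub_nonneg.mpr (hφ1 z)) (sub_nonneg.mpr (hin z hz))]
    · rw [Set.indicator_of_notMem hz, Set.indicator_of_notMem hz]
      nlinarith [mul_nonneg (hφ0 z) (sub_nonneg.mpr (hout z hz))]
  have hT := Summable.tsum_le_tsum hpt (SφY.add (SiX.mul_left c)) (SiY.add (SφX.mul_left c))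
  rw [Summable.tsum_add SφY (SiX.mul_left c), Summable.tsum_add SiY (SφX.mul_left c),
    tsum_mul_left, tsum_mul_left] at hT
  have := mul_le_mul_of_nonneg_left hB hc
  linarith

/-- Monotone chain yielding the robustness conclusion. -/
theorem monotone_chain_robustness (σ : ℝ) (hσ : 0 < σ) (d : ℕ)
    (x δ : Fin d → ℤ) (tA tB : ℝ)
    (SA : Set (Fin d → ℤ)) (hSA : SA = {z | iprod d (z - x) δ ≤ tA})
    (SB : Set (Fin d → ℤ)) (hSB : SB = {z | iprod d (z - x) δ ≥ tB})
    (φA φB : (Fin d → ℤ) → ℝ)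
    (hφA0 : ∀ z, 0 ≤ φA z) (hφA1 : ∀ z, φA z ≤ 1)
    (hφB0 : ∀ z, 0 ≤ φB z) (hφB1 : ∀ z, φB z ≤ 1)
    (hA : ∑' z, φA z * dgaussProd σ d x z ≥ ∑' z : SA, dgaussProd σ d x z)
    (hB : ∑' z, φB z * dgaussProd σ d x z ≤ ∑' z : SB, dgaussProd σ d x z) :
    (∑' z, φA z * dgaussProd σ d (x + δ) z ≥
      ∑' z : SA, dgaussProd σ d (x + δ) z) ∧
    (∑' z, φB z * dgaussProd σ d (x + δ) z ≤
      ∑' z : SB, dgaussProd σ d (x + δ) z) := by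
  have hpX := dgaussProd_summable σ hσ d x
  have hpY := dgaussProd_summable σ hσ d (x + δ)
  have hX0 := dgaussProd_nonneg σ hσ d x
  have hY0 := dgaussProd_nonneg σ hσ d (x + δ)
  have hσ2 : (0:ℝ) < 2 * σ^2 := by positivity
  have ratio : ∀ z, dgaussProd σ d (x + δ) z =
      dgaussProd σ d x z * Real.exp ((2 * iprod d (z - x) δ - nsq d δ) / (2 * σ^2)) :=
    fun z => dgaussProd_ratio σ hσ d x δ z
  constructor
  · refine NP_ge _ _ hpX hpY hX0 hY0 SA φA hφA0 hφA1
      (Real.exp ((2 * tA - nsq d δ) / (2 * σ^2))) (Real.exp_pos _).le ?_ ?_ hA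
    · intro z hz
      rw [hSA] at hz
      have hle : iprod d (z - x) δ ≤ tA := hz
      rw [ratio z]
      calc dgaussProd σ d x z * Real.exp ((2 * iprod d (z - x) δ - nsq d δ) / (2 * σ^2))
          = Real.exp ((2 * iprod d (z - x) δ - nsq d δ) / (2 * σ^2)) * dgaussProd σ d x z :=
            mul_comm _ _
        _ ≤ Real.exp ((2 * tA - nsq d δ) / (2 * σ^2)) * dgaussProd σ d x z :=
            mul_le_mul_of_nonneg_right (Real.exp_le_exp.mpr (by gcongr)) (hX0 z)
    · intro z hz
      rw [hSA] at hz
      have hle : tA ≤ iprod d (z - x) δ := le_of_lt (not_le.mp hz)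
      rw [ratio z]
      calc Real.exp ((2 * tA - nsq d δ) / (2 * σ^2)) * dgaussProd σ d x z
          ≤ Real.exp ((2 * iprod d (z - x) δ - nsq d δ) / (2 * σ^2)) * dgaussProd σ d x z :=
            mul_le_mul_of_nonneg_right (Real.exp_le_exp.mpr (by gcongr)) (hX0 z)
        _ = dgaussProd σ d x z * Real.exp ((2 * iprod d (z - x) δ - nsq d δ) / (2 * σ^2)) :=
            mul_comm _ _
  · refine NP_le _ _ hpX hpY hX0 hY0 SB φB hφB0 hφB1
      (Real.exp ((2 * tB - nsq d δ) / (2 * σ^2))) (Real.exp_pos _).le ?_ ?_ hB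
    · intro z hz
      rw [hSB] at hz
      have hle : tB ≤ iprod d (z - x) δ := hz
      rw [ratio z]
      calc Real.exp ((2 * tB - nsq d δ) / (2 * σ^2)) * dgaussProd σ d x z
          ≤ Real.exp ((2 * iprod d (z - x) δ - nsq d δ) / (2 * σ^2)) * dgaussProd σ d x z :=
            mul_le_mul_of_nonneg_right (Real.exp_le_exp.mpr (by gcongr)) (hX0 z)
        _ = dgaussProd σ d x z * Real.exp ((2 * iprod d (z - x) δ - nsq d δ) / (2 * σ^2)) :=
            mul_comm _ _
    · intro z hz
      rw [hSB] at hz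
      have hle : iprod d (z - x) δ ≤ tB := le_of_lt (not_le.mp hz)
      rw [ratio z]
      calc dgaussProd σ d x z * Real.exp ((2 * iprod d (z - x) δ - nsq d δ) / (2 * σ^2))
          = Real.exp ((2 * iprod d (z - x) δ - nsq d δ) / (2 * σ^2)) * dgaussProd σ d x z :=
            mul_comm _ _
        _ ≤ Real.exp ((2 * tB - nsq d δ) / (2 * σ^2)) * dgaussProd σ d x z :=
            mul_le_mul_of_nonneg_right (Real.exp_le_exp.mpr (by gcongr)) (hX0 z)
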